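/- arXiv:1909.09048 — 2 statements merged into one kernel-verified Lean document; each statement's English description precedes it below -/
import Mathlib

section
/- Extension by a continuous retraction: let F be a non-archimedean local field, V ⊆ F^k open, g : V → F^{n-k} continuous, Z ⊆ F^n the graph of g, and X ⊆ F^n open containing Z. For z ∈ V let B_z be the maximal ball of radius ≤ 1 in F^n around (z, g(z)) contained in X (assumed to exist). Then the map ν sending f ∈ S(Z) to the function x ↦ f(p(x), g(p(x))) · 1_{B_{p(x)}}(x), where p : F^n → F^k is the coordinate projection, is a linear map S(Z) → S(X) with ν(f)|_Z = f. -/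
open Metric Classical

variable {F : Type*} [NontriviallyNormedField F] {k m : ℕ}

/-- The graph `Z ⊆ F^k × F^m` of `g : V → F^m`. -/
def graphSet (V : Set (Fin k → F)) (g : (Fin k → F) → (Fin m → F)) :
    Set ((Fin k → F) × (Fin m → F)) :=
  {p | p.1 ∈ V ∧ p.2 = g p.1}

/-- The extension map `ν` sending `f ∈ S(Z)` to `x ↦ f (p x, g (p x)) · 1_{B_{p x}} x`,
where `p` is the coordinate projection and `B_z` is the closed ball of radius `rad z`
around `(z, g z)`. -/
noncomputable def nuMap (V : Set (Fin k → F)) (g : (Fin k → F) → (Fin m → F))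
    (rad : (Fin k → F) → ℝ) (f : ↥(graphSet V g) → ℂ) :
    ((Fin k → F) × (Fin m → F)) → ℂ := fun x =>
  if h : x.1 ∈ V ∧ x ∈ closedBall ((x.1, g x.1)) (rad x.1)
  then f ⟨(x.1, g x.1), ⟨h.1, rfl⟩⟩ else 0

section Aux

lemma ultraF_aux (hd : ∀ a b : F, ‖a + b‖ ≤ max ‖a‖ ‖b‖) (a b c : F) : dist a c ≤ max (dist a b) (dist b c) := by
  have h := hd (a - b) (b - c)
  simpa [dist_eq_norm, sub_add_sub_cancel] using h

lemma ultraPi_aux (hd : ∀ a b : F, ‖a + b‖ ≤ max ‖a‖ ‖b‖) {l : ℕ} (x y z : Fin l → F) :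
    dist x z ≤ max (dist x y) (dist y z) := by
  rw [dist_pi_le_iff (le_max_of_le_left dist_nonneg)]
  intro i
  exact (ultraF_aux hd _ _ _).trans
    (max_le_max (dist_le_pi_dist x y i) (dist_le_pi_dist y z i))

lemma ultraP_aux (hd : ∀ a b : F, ‖a + b‖ ≤ max ‖a‖ ‖b‖) (x y z : (Fin k → F) × (Fin m → F)) :
    dist x z ≤ max (dist x y) (dist y z) := by
  have hfst : ∀ a b : (Fin k → F) × (Fin m → F), dist a.1 b.1 ≤ dist a b := by
    intro a b; rw [Prod.dist_eq]; exact le_max_left _ _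
  have hsnd : ∀ a b : (Fin k → F) × (Fin m → F), dist a.2 b.2 ≤ dist a b := by
    intro a b; rw [Prod.dist_eq]; exact le_max_right _ _
  rw [Prod.dist_eq]
  refine max_le ?_ ?_
  · exact (ultraPi_aux hd _ _ _).trans (max_le_max (hfst x y) (hfst y z))
  · exact (ultraPi_aux hd _ _ _).trans (max_le_max (hsnd x y) (hsnd y z))

lemma ballEqP_aux (hd : ∀ a b : F, ‖a + b‖ ≤ max ‖a‖ ‖b‖) {c c' : (Fin k → F) × (Fin m → F)} {r : ℝ} (h : dist c c' ≤ r) :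
    closedBall c r = closedBall c' r := by
  ext x
  simp only [mem_closedBall]
  constructor <;> intro hx
  · exact (ultraP_aux hd x c c').trans (max_le hx h)
  · refine (ultraP_aux hd x c' c).trans (max_le hx ?_)
    rw [dist_comm]; exact h

end Aux

/-- Extension by a continuous retraction: let `V ⊆ F^k` be open, `g : V → F^{m}` continuous,
`Z` the graph of `g`, `X ⊇ Z` open, and for `z ∈ V` let `B_z` be the maximal closed ball of
radius `rad z ≤ 1` around `(z, g z)` contained in `X`. Then `ν` maps Schwartz–Bruhat
functions on `Z` to Schwartz–Bruhat functions supported in `X`, is linear, and restricts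
back to the identity on `Z`. -/
theorem nuMap_linear_section_schwartzBruhat
    (hd : ∀ a b : F, ‖a + b‖ ≤ max ‖a‖ ‖b‖) [ProperSpace F]
    (V : Set (Fin k → F)) (hV : IsOpen V)
    (g : (Fin k → F) → (Fin m → F)) (hg : ContinuousOn g V)
    (X : Set ((Fin k → F) × (Fin m → F))) (hX : IsOpen X)
    (hZX : graphSet V g ⊆ X)
    (rad : (Fin k → F) → ℝ)
    (hrad : ∀ z ∈ V, 0 < rad z ∧ rad z ≤ 1 ∧
      closedBall ((z, g z)) (rad z) ⊆ X ∧
      ∀ r : ℝ, rad z < r → r ≤ 1 → ¬ closedBall ((z, g z)) r ⊆ X) :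
    (∀ f : ↥(graphSet V g) → ℂ, IsLocallyConstant f → HasCompactSupport f →
      IsLocallyConstant (nuMap V g rad f) ∧
      HasCompactSupport (nuMap V g rad f) ∧
      tsupport (nuMap V g rad f) ⊆ X ∧
      ∀ z : ↥(graphSet V g), nuMap V g rad f z = f z) ∧
    (∀ (f f' : ↥(graphSet V g) → ℂ) (c : ℂ),
      nuMap V g rad (c • f + f') = c • nuMap V g rad f + nuMap V g rad f') := by
  have ultra := ultraP_aux (k := k) (m := m) hd
  -- maximality forces the radius function to be "locally constant" along the graph
  have radLe : ∀ z ∈ V, ∀ z' ∈ V,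
      dist ((z, g z) : (Fin k → F) × (Fin m → F)) (z', g z') ≤ rad z → rad z ≤ rad z' := by
    intro z hz z' hz' hdist
    by_contra hlt
    push_neg at hlt
    refine (hrad z' hz').2.2.2 (rad z) hlt (hrad z hz).2.1 ?_
    rw [ballEqP_aux hd (by rw [dist_comm]; exact hdist)]
    exact (hrad z hz).2.2.1
  have radEq : ∀ z ∈ V, ∀ z' ∈ V,
      dist ((z, g z) : (Fin k → F) × (Fin m → F)) (z', g z') ≤ rad z → rad z = rad z' := by
    intro z hz z' hz' hdist
    have h1 := radLe z hz z' hz' hdist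
    have h2 := radLe z' hz' z hz (by rw [dist_comm]; exact hdist.trans h1)
    exact le_antisymm h1 h2
  constructor
  · intro f hlc hcs
    have hnu : ∀ y : (Fin k → F) × (Fin m → F), nuMap V g rad f y =
        if h : y.1 ∈ V ∧ y ∈ closedBall ((y.1, g y.1)) (rad y.1)
        then f ⟨(y.1, g y.1), ⟨h.1, rfl⟩⟩ else 0 := fun _ => rfl
    set K : Set ((Fin k → F) × (Fin m → F)) := Subtype.val '' tsupport f with hKdef
    have hKc : IsCompact K := hcs.image continuous_subtype_val
    set K1 : Set (Fin k → F) := Prod.fst '' K with hK1def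
    have hK1c : IsCompact K1 := hKc.image continuous_fst
    have hK1V : K1 ⊆ V := by
      rintro _ ⟨_, ⟨w, _, rfl⟩, rfl⟩
      exact w.prop.1
    have hf0 : ∀ z : ↥(graphSet V g), z.val.1 ∉ K1 → f z = 0 := by
      intro z hz
      by_contra h
      exact hz ⟨z.val, ⟨z, subset_tsupport f h, rfl⟩, rfl⟩
    have hfst : ∀ a b : (Fin k → F) × (Fin m → F), dist a.1 b.1 ≤ dist a b := by
      intro a b; rw [Prod.dist_eq]; exact le_max_left _ _
    -- the key local constancy statement
    have key : ∀ x : (Fin k → F) × (Fin m → F), ∃ ε > 0, ∀ y, dist y x < ε →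
        nuMap V g rad f y = nuMap V g rad f x := by
      intro x
      by_cases hxV : x.1 ∈ V
      · obtain ⟨hr0, hr1, hrX, hrmax⟩ := hrad x.1 hxV
        have hgx : ContinuousAt g x.1 := hg.continuousAt (hV.mem_nhds hxV)
        by_cases hxB : x ∈ closedBall ((x.1, g x.1)) (rad x.1)
        · -- interior case: value nearby equals value at x
          set z0 : ↥(graphSet V g) := ⟨(x.1, g x.1), hxV, rfl⟩ with hz0
          obtain ⟨ε, hε0, hεf⟩ := Metric.isOpen_iff.1 (hlc {f z0}) z0 rfl
          obtain ⟨δ1, hδ10, hδ1⟩ := Metric.continuousAt_iff.1 hgx (min ε (rad x.1))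
            (lt_min hε0 hr0)
          obtain ⟨δ2, hδ20, hδ2⟩ := Metric.isOpen_iff.1 hV x.1 hxV
          refine ⟨min (min δ1 δ2) (min ε (rad x.1)), by positivity, ?_⟩
          intro y hy
          have hy1x : dist y.1 x.1 < min (min δ1 δ2) (min ε (rad x.1)) :=
            lt_of_le_of_lt (hfst y x) hy
          have hy1V : y.1 ∈ V := hδ2 (mem_ball.2 (lt_of_lt_of_le hy1x
            ((min_le_left _ _).trans (min_le_right _ _))))
          have hgy : dist (g y.1) (g x.1) < min ε (rad x.1) :=
            hδ1 (lt_of_lt_of_le hy1x ((min_le_left _ _).trans (min_le_left _ _)))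
          have hcc : dist ((y.1, g y.1) : (Fin k → F) × (Fin m → F)) (x.1, g x.1)
              < min ε (rad x.1) := by
            rw [Prod.dist_eq]
            exact max_lt (lt_of_lt_of_le hy1x (min_le_right _ _)) hgy
          have hccr : dist ((y.1, g y.1) : (Fin k → F) × (Fin m → F)) (x.1, g x.1)
              ≤ rad x.1 := hcc.le.trans (min_le_right _ _)
          have hradEq : rad x.1 = rad y.1 :=
            radEq x.1 hxV y.1 hy1V (by rw [dist_comm]; exact hccr)
          have hyB : y ∈ closedBall ((y.1, g y.1)) (rad y.1) := by
            rw [mem_closedBall, ← hradEq]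
            calc dist y (y.1, g y.1) ≤ max (dist y x) (dist x ((y.1 : Fin k → F), g y.1)) :=
                  ultra _ _ _
              _ ≤ max (dist y x) (max (dist x ((x.1 : Fin k → F), g x.1))
                  (dist ((x.1 : Fin k → F), g x.1) (y.1, g y.1))) :=
                  max_le_max le_rfl (ultra _ _ _)
              _ ≤ rad x.1 := by
                  refine max_le (hy.le.trans (min_le_of_right_le (min_le_right _ _)))
                    (max_le (mem_closedBall.1 hxB) ?_)
                  rw [dist_comm]; exact hccr
          rw [hnu y, hnu x, dif_pos ⟨hy1V, hyB⟩, dif_pos ⟨hxV, hxB⟩]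
          have h1 : f ⟨((y.1 : Fin k → F), g y.1), ⟨hy1V, rfl⟩⟩ = f z0 := by
            have := hεf (show (⟨((y.1 : Fin k → F), g y.1), ⟨hy1V, rfl⟩⟩ : ↥(graphSet V g))
              ∈ ball z0 ε by
                rw [mem_ball, Subtype.dist_eq]
                exact lt_of_lt_of_le hcc (min_le_left _ _))
            simpa using this
          rw [h1]
        · -- x outside its ball: the map vanishes nearby
          have hxB' : rad x.1 < dist x ((x.1, g x.1)) := lt_of_not_ge
            (fun h => hxB (mem_closedBall.2 h))
          obtain ⟨δ1, hδ10, hδ1⟩ := Metric.continuousAt_iff.1 hgx (rad x.1) hr0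
          obtain ⟨δ2, hδ20, hδ2⟩ := Metric.isOpen_iff.1 hV x.1 hxV
          refine ⟨min (min δ1 δ2) (rad x.1), by positivity, ?_⟩
          intro y hy
          have hy1x : dist y.1 x.1 < min (min δ1 δ2) (rad x.1) := lt_of_le_of_lt (hfst y x) hy
          have hy1V : y.1 ∈ V := hδ2 (mem_ball.2 (lt_of_lt_of_le hy1x
            ((min_le_left _ _).trans (min_le_right _ _))))
          have hgy : dist (g y.1) (g x.1) < rad x.1 :=
            hδ1 (lt_of_lt_of_le hy1x ((min_le_left _ _).trans (min_le_left _ _)))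
          have hccr : dist ((y.1, g y.1) : (Fin k → F) × (Fin m → F)) (x.1, g x.1)
              ≤ rad x.1 := by
            rw [Prod.dist_eq]
            exact max_le (hy1x.le.trans (min_le_right _ _)) hgy.le
          have hradEq : rad x.1 = rad y.1 :=
            radEq x.1 hxV y.1 hy1V (by rw [dist_comm]; exact hccr)
          have hyB : y ∉ closedBall ((y.1, g y.1)) (rad y.1) := by
            intro hmem
            have hchain : dist x ((x.1, g x.1)) ≤ rad x.1 := by
              calc dist x ((x.1 : Fin k → F), g x.1)
                  ≤ max (dist x y) (dist y ((x.1 : Fin k → F), g x.1)) := ultra _ _ _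
                _ ≤ max (dist x y) (max (dist y ((y.1 : Fin k → F), g y.1))
                    (dist ((y.1 : Fin k → F), g y.1) (x.1, g x.1))) :=
                    max_le_max le_rfl (ultra _ _ _)
                _ ≤ rad x.1 := by
                    refine max_le ?_ (max_le ?_ hccr)
                    · rw [dist_comm]; exact hy.le.trans (min_le_right _ _)
                    · rw [hradEq]; exact mem_closedBall.1 hmem
            exact absurd hchain (not_le.2 hxB')
          rw [hnu y, hnu x, dif_neg (fun h => hyB h.2), dif_neg (fun h => hxB h.2)]
      · -- x.1 ∉ V: near x the projection stays outside the (compact) support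
        have hxK1 : x.1 ∉ K1 := fun h => hxV (hK1V h)
        obtain ⟨δ, hδ0, hδ⟩ := Metric.isOpen_iff.1 hK1c.isClosed.isOpen_compl x.1 hxK1
        refine ⟨δ, hδ0, ?_⟩
        intro y hy
        have hy1 : y.1 ∉ K1 := hδ (mem_ball.2 (lt_of_le_of_lt (hfst y x) hy))
        have hxside : nuMap V g rad f x = 0 := by
          rw [hnu x]
          exact dif_neg (fun hh => hxV hh.1)
        rw [hxside, hnu y]
        by_cases h : y.1 ∈ V ∧ y ∈ closedBall ((y.1, g y.1)) (rad y.1)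
        · rw [dif_pos h]
          exact hf0 _ hy1
        · rw [dif_neg h]
    have hlcnu : IsLocallyConstant (nuMap V g rad f) := by
      intro s
      rw [Metric.isOpen_iff]
      intro x hx
      obtain ⟨ε, hε, h⟩ := key x
      exact ⟨ε, hε, fun y hy => by
        rw [Set.mem_preimage, h y (mem_ball.1 hy)]; exact hx⟩
    have hsuppcl : IsClosed (Function.support (nuMap V g rad f)) := by
      have hs : Function.support (nuMap V g rad f) = (nuMap V g rad f ⁻¹' {0})ᶜ := by
        ext y; simp [Function.mem_support]
      rw [hs]
      exact (hlcnu {0}).isClosed_compl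
    have hts : tsupport (nuMap V g rad f) = Function.support (nuMap V g rad f) :=
      hsuppcl.closure_eq
    obtain ⟨R, hR⟩ := hKc.isBounded.subset_closedBall 0
    have hsuppB : Function.support (nuMap V g rad f) ⊆ closedBall 0 (R + 1) := by
      intro y hy
      rw [Function.mem_support, hnu y] at hy
      by_cases h : y.1 ∈ V ∧ y ∈ closedBall ((y.1, g y.1)) (rad y.1)
      · rw [dif_pos h] at hy
        have hK : ((y.1, g y.1) : (Fin k → F) × (Fin m → F)) ∈ K :=
          ⟨⟨(y.1, g y.1), ⟨h.1, rfl⟩⟩, subset_tsupport f hy, rfl⟩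
        have h1 : dist ((y.1, g y.1) : (Fin k → F) × (Fin m → F)) 0 ≤ R :=
          mem_closedBall.1 (hR hK)
        have h2 : dist y ((y.1, g y.1)) ≤ 1 :=
          (mem_closedBall.1 h.2).trans (hrad y.1 h.1).2.1
        rw [mem_closedBall]
        calc dist y 0 ≤ dist y ((y.1, g y.1)) + dist ((y.1, g y.1)) 0 := dist_triangle _ _ _
          _ ≤ 1 + R := add_le_add h2 h1
          _ = R + 1 := add_comm _ _
      · rw [dif_neg h] at hy
        exact absurd rfl hy
    have hsuppX : Function.support (nuMap V g rad f) ⊆ X := by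
      intro y hy
      rw [Function.mem_support, hnu y] at hy
      by_cases h : y.1 ∈ V ∧ y ∈ closedBall ((y.1, g y.1)) (rad y.1)
      · exact (hrad y.1 h.1).2.2.1 h.2
      · rw [dif_neg h] at hy
        exact absurd rfl hy
    refine ⟨hlcnu, ?_, ?_, ?_⟩
    · exact Metric.isCompact_of_isClosed_isBounded (isClosed_tsupport _)
        (by rw [hts]; exact Metric.isBounded_closedBall.subset hsuppB)
    · rw [hts]; exact hsuppX
    · intro z
      have hz1 : z.val.1 ∈ V := z.prop.1
      have hval : ((z.val.1, g z.val.1) : (Fin k → F) × (Fin m → F)) = z.val :=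
        Prod.ext rfl z.prop.2.symm
      have hzB : (z : (Fin k → F) × (Fin m → F)) ∈
          closedBall ((z.val.1, g z.val.1)) (rad z.val.1) := by
        rw [mem_closedBall, hval, dist_self]
        exact (hrad _ hz1).1.le
      rw [hnu z, dif_pos ⟨hz1, hzB⟩]
      congr 1
      exact Subtype.ext hval
  · intro f f' c
    funext x
    by_cases h : x.1 ∈ V ∧ x ∈ closedBall ((x.1, g x.1)) (rad x.1)
    · simp only [nuMap, Pi.add_apply, Pi.smul_apply]
      rw [dif_pos h, dif_pos h, dif_pos h]
    · simp only [nuMap, Pi.add_apply, Pi.smul_apply]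
      rw [dif_neg h, dif_neg h, dif_neg h]
      simp
end

section
/- Let F be a field with a non-archimedean absolute value, O_F its valuation ring. Define i : F → O_F × O_F by i(x) = (x, 0) if |x| ≤ 1 and i(x) = (x^{-1}, 1) otherwise. Then i is injective, and there exists a function inv : O_F² → O_F² expressible using only ring operations, the restricted division D(a,b) (equal to a/b if |a| ≤ |b| ≠ 0, else 0), and case distinction on the second coordinate, such that inv(i(x)) = i(x^{-1}) for all x ∈ F (with the convention 0^{-1} = 0). -/
open Classical

variable {F : Type*} [NontriviallyNormedField F]

/-- Restricted division: `D a b = a / b` if `‖a‖ ≤ ‖b‖` and `b ≠ 0`, else `0`. -/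
noncomputable def restrictedDiv (a b : F) : F :=
  if ‖a‖ ≤ ‖b‖ ∧ b ≠ 0 then a / b else 0

/-- The embedding `i : F → O_F × O_F`, `i x = (x, 0)` if `‖x‖ ≤ 1` and `(x⁻¹, 1)` otherwise. -/
noncomputable def embedOO (x : F) : F × F :=
  if ‖x‖ ≤ 1 then (x, 0) else (x⁻¹, 1)

/-- A candidate for `inv`, built only from ring operations, restricted division `D`, and a
case distinction on the second coordinate: on `(a, b)`, if `b = 1` return `(a, 0)`;
otherwise return `(D 1 a + a * (1 - a * D 1 a), D a a * (1 - a * D 1 a))`. -/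
noncomputable def invOO (p : F × F) : F × F :=
  if p.2 = 1 then (p.1, 0)
  else (restrictedDiv 1 p.1 + p.1 * (1 - p.1 * restrictedDiv 1 p.1),
        restrictedDiv p.1 p.1 * (1 - p.1 * restrictedDiv 1 p.1))

/-- `i` is injective, takes values in `O_F × O_F`, and the explicit function `invOO`
(expressed using only ring operations, restricted division, and case distinction on the
second coordinate) satisfies `invOO (i x) = i x⁻¹` for all `x ∈ F` (with the convention
`0⁻¹ = 0`). -/
theorem embedOO_injective_and_inv
    (hd : ∀ a b : F, ‖a + b‖ ≤ max ‖a‖ ‖b‖) :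
    Function.Injective (embedOO (F := F)) ∧
    (∀ x : F, ‖(embedOO x).1‖ ≤ 1 ∧ ‖(embedOO x).2‖ ≤ 1) ∧
    ∀ x : F, invOO (embedOO x) = embedOO x⁻¹ := by
  refine ⟨?_, ?_, ?_⟩
  · intro x y hxy
    unfold embedOO at hxy
    by_cases hx : ‖x‖ ≤ 1 <;> by_cases hy : ‖y‖ ≤ 1 <;>
      simp [hx, hy, Prod.ext_iff] at hxy
    · exact hxy
    · exact hxy
  · intro x
    unfold embedOO
    by_cases hx : ‖x‖ ≤ 1
    · simp [hx]
    · push_neg at hx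
      simp only [if_neg (not_le.2 hx)]
      refine ⟨?_, by simp⟩
      rw [norm_inv]
      exact inv_le_one_of_one_le₀ hx.le
  · intro x
    by_cases hx : ‖x‖ ≤ 1
    · have hix : embedOO x = (x, 0) := if_pos hx
      rcases eq_or_ne x 0 with rfl | hx0
      · simp [embedOO, invOO, restrictedDiv]
      · rcases lt_or_eq_of_le hx with hlt | heq
        · have hd1 : restrictedDiv (1 : F) x = 0 := by
            rw [restrictedDiv, if_neg]
            rintro ⟨h1, -⟩
            rw [norm_one] at h1
            exact absurd (h1.trans_lt hlt) (lt_irrefl 1)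
          have hdx : restrictedDiv x x = 1 := by
            rw [restrictedDiv, if_pos ⟨le_refl _, hx0⟩, div_self hx0]
          have hxinv : ¬ ‖x⁻¹‖ ≤ 1 := by
            rw [norm_inv, not_le]
            exact (one_lt_inv₀ (norm_pos_iff.2 hx0)).2 hlt
          rw [hix, invOO]
          simp only [hdx, hd1]
          rw [embedOO, if_neg hxinv, inv_inv]
          norm_num
        · have hd1 : restrictedDiv (1 : F) x = x⁻¹ := by
            rw [restrictedDiv, if_pos ⟨by rw [norm_one, heq], hx0⟩, one_div]
          have hdx : restrictedDiv x x = 1 := by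
            rw [restrictedDiv, if_pos ⟨le_refl _, hx0⟩, div_self hx0]
          have hxinv : ‖x⁻¹‖ ≤ 1 := by rw [norm_inv, heq]; norm_num
          rw [hix, invOO]
          simp only [hdx, hd1, mul_inv_cancel₀ hx0]
          rw [embedOO, if_pos hxinv]
          norm_num
    · have hix : embedOO x = (x⁻¹, 1) := if_neg hx
      push_neg at hx
      have hx0 : x ≠ 0 := by
        intro h; rw [h, norm_zero] at hx; linarith
      have hxinv : ‖x⁻¹‖ ≤ 1 := by rw [norm_inv]; exact inv_le_one_of_one_le₀ hx.le
      rw [hix, invOO, if_pos rfl, embedOO, if_pos hxinv]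
end
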